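/- Consider the hierarchical system ẋ₁ = f₁(x₁,t), ẋ₂ = f₂(x₁,x₂,t) with continuously differentiable f₁, f₂. If there exist λ₁, λ₂ > 0 such that the symmetric parts of F₁ = ∂f₁/∂x₁ and F₂ = ∂f₂/∂x₂ satisfy F₁ + F₁^T ≤ −2λ₁I and F₂ + F₂^T ≤ −2λ₂I uniformly, and F₂₁ = ∂f₂/∂x₁ is uniformly bounded in operator norm, then any two solutions of the combined system converge to each other exponentially: ‖(x₁(t)−y₁(t), x₂(t)−y₂(t))‖ ≤ C·e^{−λt}‖(x₁(t₀)−y₁(t₀), x₂(t₀)−y₂(t₀))‖ for some constants C ≥ 1 and λ > 0 independent of the initial conditions. -/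

import Mathlib

open Matrix

/-! With `δᵢ = xᵢ - yᵢ`, the weighted energy `V = α ‖δ₁‖² + ‖δ₂‖²` is a Lyapunov function for
the difference of two solutions. The mean value theorem along the segment between two states turns
the Jacobian bounds into `⟪δ₁, f₁ x₁ - f₁ y₁⟫ ≤ -λ₁ ‖δ₁‖²`, the same for the second block, and a
coupling contribution of at most `B ‖δ₁‖ ‖δ₂‖`. For `α ≥ B² / (λ₁ λ₂)` the coupling is absorbed by
the decay of the first block, so `V' ≤ -(min λ₁ λ₂) V`, and Grönwall's inequality gives the
estimate with `C = √α` and rate `min λ₁ λ₂ / 2`. -/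

section DotProduct

variable {ι κ : Type*} [Fintype ι] [Fintype κ]

theorem dotProduct_le_sqrt_mul_sqrt (a b : ι → ℝ) :
    a ⬝ᵥ b ≤ √(a ⬝ᵥ a) * √(b ⬝ᵥ b) := by
  simpa only [dotProduct, sq] using Real.sum_mul_le_sqrt_mul_sqrt Finset.univ a b

theorem dotProduct_self_nonneg {R : Type*} [Ring R] [LinearOrder R] [IsStrictOrderedRing R]
    (v : ι → R) : 0 ≤ v ⬝ᵥ v :=
  Finset.sum_nonneg fun i _ => mul_self_nonneg (v i)

theorem dotProduct_mulVec_self_eq_half (M : Matrix ι ι ℝ) (v : ι → ℝ) :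
    v ⬝ᵥ (M *ᵥ v) = v ⬝ᵥ ((M + Mᵀ) *ᵥ v) / 2 := by
  rw [add_mulVec, dotProduct_add, dotProduct_mulVec v Mᵀ, vecMul_transpose, dotProduct_comm]
  ring

theorem HasDerivAt.dotProduct {u v : ℝ → ι → ℝ} {u' v' : ι → ℝ} {s : ℝ}
    (hu : HasDerivAt u u' s) (hv : HasDerivAt v v' s) :
    HasDerivAt (fun t => u t ⬝ᵥ v t) (u' ⬝ᵥ v s + u s ⬝ᵥ v') s := by
  have h := HasDerivAt.fun_sum fun i (_ : i ∈ Finset.univ) =>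
    (hasDerivAt_pi.1 hu i).mul (hasDerivAt_pi.1 hv i)
  simpa only [_root_.dotProduct, Pi.mul_apply, Finset.sum_add_distrib] using h

theorem HasDerivAt.dotProduct_self {u : ℝ → ι → ℝ} {u' : ι → ℝ} {s : ℝ}
    (hu : HasDerivAt u u' s) :
    HasDerivAt (fun t => u t ⬝ᵥ u t) (2 * (u s ⬝ᵥ u')) s := by
  convert hu.dotProduct hu using 1
  rw [dotProduct_comm]
  ring

theorem exists_dotProduct_sub_eq_dotProduct_mulVec {g : (ι → ℝ) → κ → ℝ}
    {M : (ι → ℝ) → Matrix κ ι ℝ}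
    (hg : ∀ x, HasFDerivAt g (LinearMap.toContinuousLinearMap (M x).mulVecLin) x)
    (w : κ → ℝ) (a b : ι → ℝ) :
    ∃ x, w ⬝ᵥ (g a - g b) = w ⬝ᵥ (M x *ᵥ (a - b)) := by
  set γ : ℝ → ι → ℝ := fun s => b + s • (a - b)
  have hγ : ∀ s, HasDerivAt γ (a - b) s := fun s => by
    simpa only [γ, id, one_smul] using ((hasDerivAt_id s).smul_const (a - b)).const_add b
  have hφ : ∀ s, HasDerivAt (fun s => w ⬝ᵥ g (γ s)) (w ⬝ᵥ (M (γ s) *ᵥ (a - b))) s :=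
    fun s => by simpa using (hasDerivAt_const s w).dotProduct ((hg (γ s)).comp_hasDerivAt s (hγ s))
  obtain ⟨s, -, hs⟩ := exists_hasDerivAt_eq_slope _ _ zero_lt_one
    (fun s _ => (hφ s).continuousAt.continuousWithinAt) (fun s _ => hφ s)
  refine ⟨γ s, ?_⟩
  simpa [γ, dotProduct_sub] using hs.symm

theorem dotProduct_sub_le_of_symm_le {g : (ι → ℝ) → ι → ℝ}
    {M : (ι → ℝ) → Matrix ι ι ℝ}
    (hg : ∀ x, HasFDerivAt g (LinearMap.toContinuousLinearMap (M x).mulVecLin) x) {lam : ℝ}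
    (hM : ∀ x v, v ⬝ᵥ ((M x + (M x)ᵀ) *ᵥ v) ≤ -2 * lam * (v ⬝ᵥ v)) (a b : ι → ℝ) :
    (a - b) ⬝ᵥ (g a - g b) ≤ -lam * ((a - b) ⬝ᵥ (a - b)) := by
  obtain ⟨x, hx⟩ := exists_dotProduct_sub_eq_dotProduct_mulVec hg (a - b) a b
  rw [hx, dotProduct_mulVec_self_eq_half]
  linarith [hM x (a - b)]

theorem dotProduct_sub_le_of_mulVec_le {g : (ι → ℝ) → κ → ℝ} {M : (ι → ℝ) → Matrix κ ι ℝ}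
    (hg : ∀ x, HasFDerivAt g (LinearMap.toContinuousLinearMap (M x).mulVecLin) x) {B : ℝ}
    (hM : ∀ x v, √((M x *ᵥ v) ⬝ᵥ (M x *ᵥ v)) ≤ B * √(v ⬝ᵥ v)) (w : κ → ℝ) (a b : ι → ℝ) :
    w ⬝ᵥ (g a - g b) ≤ √(w ⬝ᵥ w) * (B * √((a - b) ⬝ᵥ (a - b))) := by
  obtain ⟨x, hx⟩ := exists_dotProduct_sub_eq_dotProduct_mulVec hg w a b
  rw [hx]
  exact (dotProduct_le_sqrt_mul_sqrt _ _).trans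
    (mul_le_mul_of_nonneg_left (hM x (a - b)) (Real.sqrt_nonneg _))

end DotProduct

theorem two_mul_mul_le_of_sq_le_mul {a c B : ℝ} (hc : 0 < c) (hB : B ^ 2 ≤ a * c) (p q : ℝ) :
    2 * (q * (B * p)) ≤ a * p ^ 2 + c * q ^ 2 := by
  have h : c * (2 * (q * (B * p))) ≤ c * (a * p ^ 2 + c * q ^ 2) := by
    nlinarith [sq_nonneg (B * p - c * q), mul_le_mul_of_nonneg_right hB (sq_nonneg p)]
  exact le_of_mul_le_mul_left h hc

theorem le_mul_exp_of_hasDerivAt_le_mul {V V' : ℝ → ℝ} {K t₀ t : ℝ}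
    (hV : ∀ s ∈ Set.Icc t₀ t, HasDerivAt V (V' s) s) (hle : ∀ s ∈ Set.Ico t₀ t, V' s ≤ K * V s)
    (ht : t₀ ≤ t) : V t ≤ V t₀ * Real.exp (K * (t - t₀)) := by
  have h := le_gronwallBound_of_liminf_deriv_right_le (ε := 0)
    (fun s hs => (hV s hs).continuousAt.continuousWithinAt)
    (fun s hs _ hr => (hV s (Set.Ico_subset_Icc_self hs)).hasDerivWithinAt.liminf_right_slope_le hr)
    le_rfl (by simpa using hle) t ⟨ht, le_rfl⟩
  rwa [gronwallBound_ε0] at h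

theorem hierarchical_energy_deriv_le {ι κ : Type*} [Fintype ι] [Fintype κ]
    {g₁ : (ι → ℝ) → ι → ℝ} {g₂ : (ι → ℝ) → (κ → ℝ) → κ → ℝ} {G₁ : (ι → ℝ) → Matrix ι ι ℝ}
    {G₂ : (ι → ℝ) → (κ → ℝ) → Matrix κ κ ℝ} {G₂₁ : (ι → ℝ) → (κ → ℝ) → Matrix κ ι ℝ}
    (hG₁ : ∀ x, HasFDerivAt g₁ (LinearMap.toContinuousLinearMap (G₁ x).mulVecLin) x)
    (hG₂ : ∀ z x, HasFDerivAt (g₂ z) (LinearMap.toContinuousLinearMap (G₂ z x).mulVecLin) x)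
    (hG₂₁ : ∀ z x, HasFDerivAt (fun y => g₂ y x)
      (LinearMap.toContinuousLinearMap (G₂₁ z x).mulVecLin) z)
    {lam₁ lam₂ B α : ℝ} (hlam₂ : 0 < lam₂) (hα : 0 ≤ α) (hαB : B ^ 2 ≤ α * lam₁ * lam₂)
    (hc₁ : ∀ x v, v ⬝ᵥ ((G₁ x + (G₁ x)ᵀ) *ᵥ v) ≤ -2 * lam₁ * (v ⬝ᵥ v))
    (hc₂ : ∀ z x v, v ⬝ᵥ ((G₂ z x + (G₂ z x)ᵀ) *ᵥ v) ≤ -2 * lam₂ * (v ⬝ᵥ v))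
    (hB : ∀ z x v, √((G₂₁ z x *ᵥ v) ⬝ᵥ (G₂₁ z x *ᵥ v)) ≤ B * √(v ⬝ᵥ v))
    (x₁ y₁ : ι → ℝ) (x₂ y₂ : κ → ℝ) :
    α * (2 * ((x₁ - y₁) ⬝ᵥ (g₁ x₁ - g₁ y₁))) + 2 * ((x₂ - y₂) ⬝ᵥ (g₂ x₁ x₂ - g₂ y₁ y₂))
      ≤ -min lam₁ lam₂ * (α * ((x₁ - y₁) ⬝ᵥ (x₁ - y₁)) + (x₂ - y₂) ⬝ᵥ (x₂ - y₂)) := by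
  set u := x₁ - y₁
  set w := x₂ - y₂
  have h₁ : u ⬝ᵥ (g₁ x₁ - g₁ y₁) ≤ -lam₁ * (u ⬝ᵥ u) := dotProduct_sub_le_of_symm_le hG₁ hc₁ x₁ y₁
  have h₂ : w ⬝ᵥ (g₂ x₁ x₂ - g₂ x₁ y₂) ≤ -lam₂ * (w ⬝ᵥ w) :=
    dotProduct_sub_le_of_symm_le (hG₂ x₁) (hc₂ x₁) x₂ y₂
  have h₂₁ : w ⬝ᵥ (g₂ x₁ y₂ - g₂ y₁ y₂) ≤ √(w ⬝ᵥ w) * (B * √(u ⬝ᵥ u)) :=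
    dotProduct_sub_le_of_mulVec_le (g := fun y => g₂ y y₂) (fun z => hG₂₁ z y₂) (hB · y₂) w x₁ y₁
  have hcross : 2 * (√(w ⬝ᵥ w) * (B * √(u ⬝ᵥ u))) ≤ α * lam₁ * (u ⬝ᵥ u) + lam₂ * (w ⬝ᵥ w) := by
    simpa only [Real.sq_sqrt (dotProduct_self_nonneg _)] using
      two_mul_mul_le_of_sq_le_mul hlam₂ hαB √(u ⬝ᵥ u) √(w ⬝ᵥ w)
  have hsplit : g₂ x₁ x₂ - g₂ y₁ y₂ = (g₂ x₁ x₂ - g₂ x₁ y₂) + (g₂ x₁ y₂ - g₂ y₁ y₂) := by abel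
  have hmin₁ : min lam₁ lam₂ * (α * (u ⬝ᵥ u)) ≤ lam₁ * (α * (u ⬝ᵥ u)) :=
    mul_le_mul_of_nonneg_right (min_le_left _ _) (mul_nonneg hα (dotProduct_self_nonneg u))
  have hmin₂ : min lam₁ lam₂ * (w ⬝ᵥ w) ≤ lam₂ * (w ⬝ᵥ w) :=
    mul_le_mul_of_nonneg_right (min_le_right _ _) (dotProduct_self_nonneg w)
  rw [hsplit, dotProduct_add]
  nlinarith [mul_le_mul_of_nonneg_left h₁ hα]

theorem stmt13_general (n₁ n₂ : ℕ)
    (f₁ : (Fin n₁ → ℝ) → ℝ → Fin n₁ → ℝ)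
    (f₂ : (Fin n₁ → ℝ) → (Fin n₂ → ℝ) → ℝ → Fin n₂ → ℝ)
    (F₁ : (Fin n₁ → ℝ) → ℝ → Matrix (Fin n₁) (Fin n₁) ℝ)
    (F₂ : (Fin n₁ → ℝ) → (Fin n₂ → ℝ) → ℝ → Matrix (Fin n₂) (Fin n₂) ℝ)
    (F₂₁ : (Fin n₁ → ℝ) → (Fin n₂ → ℝ) → ℝ → Matrix (Fin n₂) (Fin n₁) ℝ)
    (hF₁ : ∀ x₁ t, HasFDerivAt (fun y => f₁ y t)
        (LinearMap.toContinuousLinearMap (Matrix.mulVecLin (F₁ x₁ t))) x₁)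
    (hF₂ : ∀ x₁ x₂ t, HasFDerivAt (fun y => f₂ x₁ y t)
        (LinearMap.toContinuousLinearMap (Matrix.mulVecLin (F₂ x₁ x₂ t))) x₂)
    (hF₂₁ : ∀ x₁ x₂ t, HasFDerivAt (fun y => f₂ y x₂ t)
        (LinearMap.toContinuousLinearMap (Matrix.mulVecLin (F₂₁ x₁ x₂ t))) x₁)
    (t₀ lam₁ lam₂ B : ℝ) (hlam₁ : 0 < lam₁) (hlam₂ : 0 < lam₂)
    (hc₁ : ∀ x₁ t, t₀ ≤ t → ∀ v : Fin n₁ → ℝ,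
        v ⬝ᵥ ((F₁ x₁ t + (F₁ x₁ t)ᵀ) *ᵥ v) ≤ -2 * lam₁ * (v ⬝ᵥ v))
    (hc₂ : ∀ x₁ x₂ t, t₀ ≤ t → ∀ v : Fin n₂ → ℝ,
        v ⬝ᵥ ((F₂ x₁ x₂ t + (F₂ x₁ x₂ t)ᵀ) *ᵥ v) ≤ -2 * lam₂ * (v ⬝ᵥ v))
    (hbound : ∀ x₁ x₂ t v, Real.sqrt ((F₂₁ x₁ x₂ t *ᵥ v) ⬝ᵥ (F₂₁ x₁ x₂ t *ᵥ v))
        ≤ B * Real.sqrt (v ⬝ᵥ v)) :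
    ∃ C : ℝ, 1 ≤ C ∧ ∃ lam : ℝ, 0 < lam ∧
      ∀ (x₁ y₁ : ℝ → Fin n₁ → ℝ) (x₂ y₂ : ℝ → Fin n₂ → ℝ),
        (∀ t, t₀ ≤ t → HasDerivAt x₁ (f₁ (x₁ t) t) t) →
        (∀ t, t₀ ≤ t → HasDerivAt y₁ (f₁ (y₁ t) t) t) →
        (∀ t, t₀ ≤ t → HasDerivAt x₂ (f₂ (x₁ t) (x₂ t) t) t) →
        (∀ t, t₀ ≤ t → HasDerivAt y₂ (f₂ (y₁ t) (y₂ t) t) t) →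
        ∀ t, t₀ ≤ t →
          Real.sqrt ((x₁ t - y₁ t) ⬝ᵥ (x₁ t - y₁ t) + (x₂ t - y₂ t) ⬝ᵥ (x₂ t - y₂ t))
            ≤ C * Real.exp (-lam * (t - t₀)) *
              Real.sqrt ((x₁ t₀ - y₁ t₀) ⬝ᵥ (x₁ t₀ - y₁ t₀)
                + (x₂ t₀ - y₂ t₀) ⬝ᵥ (x₂ t₀ - y₂ t₀)) := by
  obtain ⟨α, hα, hαB⟩ : ∃ α : ℝ, 1 ≤ α ∧ B ^ 2 ≤ α * lam₁ * lam₂ :=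
    ⟨max 1 (B ^ 2 / (lam₁ * lam₂)), le_max_left _ _, by
      rw [mul_assoc, ← div_le_iff₀ (by positivity)]; exact le_max_right _ _⟩
  set lam := min lam₁ lam₂
  refine ⟨√α, Real.one_le_sqrt.2 hα, lam / 2, by positivity, ?_⟩
  intro x₁ y₁ x₂ y₂ hx₁ hy₁ hx₂ hy₂ t ht
  set E : ℝ → ℝ := fun s => (x₁ s - y₁ s) ⬝ᵥ (x₁ s - y₁ s) + (x₂ s - y₂ s) ⬝ᵥ (x₂ s - y₂ s)
  set V : ℝ → ℝ := fun s => α * ((x₁ s - y₁ s) ⬝ᵥ (x₁ s - y₁ s)) + (x₂ s - y₂ s) ⬝ᵥ (x₂ s - y₂ s)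
  have hV : ∀ s, t₀ ≤ s → HasDerivAt V
      (α * (2 * ((x₁ s - y₁ s) ⬝ᵥ (f₁ (x₁ s) s - f₁ (y₁ s) s)))
        + 2 * ((x₂ s - y₂ s) ⬝ᵥ (f₂ (x₁ s) (x₂ s) s - f₂ (y₁ s) (y₂ s) s))) s := fun s hs =>
    (((hx₁ s hs).sub (hy₁ s hs)).dotProduct_self.const_mul α).add
      ((hx₂ s hs).sub (hy₂ s hs)).dotProduct_self
  have hVdecay : V t ≤ V t₀ * Real.exp (-lam * (t - t₀)) :=
    le_mul_exp_of_hasDerivAt_le_mul (fun s hs => hV s hs.1)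
      (fun s hs => hierarchical_energy_deriv_le (fun x => hF₁ x s) (fun z x => hF₂ z x s)
        (fun z x => hF₂₁ z x s) hlam₂ (by linarith) hαB (fun x => hc₁ x s hs.1)
        (fun z x => hc₂ z x s hs.1) (fun z x => hbound z x s) _ _ _ _) ht
  have hEV : ∀ s, E s ≤ V s ∧ V s ≤ α * E s := fun s => by
    have := dotProduct_self_nonneg (x₁ s - y₁ s)
    have := dotProduct_self_nonneg (x₂ s - y₂ s)
    constructor <;> nlinarith
  calc √(E t) ≤ √(α * E t₀ * Real.exp (-lam * (t - t₀))) := by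
        gcongr
        exact (hEV t).1.trans (hVdecay.trans
          (mul_le_mul_of_nonneg_right (hEV t₀).2 (Real.exp_pos _).le))
    _ = √α * Real.exp (-(lam / 2) * (t - t₀)) * √(E t₀) := by
        rw [Real.sqrt_mul' _ (Real.exp_pos _).le, Real.sqrt_mul (by linarith), ← Real.exp_half]
        ring_nf

theorem stmt13 (n₁ n₂ : ℕ)
    (f₁ : (Fin n₁ → ℝ) → ℝ → Fin n₁ → ℝ)
    (f₂ : (Fin n₁ → ℝ) → (Fin n₂ → ℝ) → ℝ → Fin n₂ → ℝ)
    (F₁ : (Fin n₁ → ℝ) → ℝ → Matrix (Fin n₁) (Fin n₁) ℝ)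
    (F₂ : (Fin n₁ → ℝ) → (Fin n₂ → ℝ) → ℝ → Matrix (Fin n₂) (Fin n₂) ℝ)
    (F₂₁ : (Fin n₁ → ℝ) → (Fin n₂ → ℝ) → ℝ → Matrix (Fin n₂) (Fin n₁) ℝ)
    (hf₁ : ContDiff ℝ 1 (fun p : (Fin n₁ → ℝ) × ℝ => f₁ p.1 p.2))
    (hf₂ : ContDiff ℝ 1 (fun p : (Fin n₁ → ℝ) × (Fin n₂ → ℝ) × ℝ => f₂ p.1 p.2.1 p.2.2))
    (hF₁ : ∀ x₁ t, HasFDerivAt (fun y => f₁ y t)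
        (LinearMap.toContinuousLinearMap (Matrix.mulVecLin (F₁ x₁ t))) x₁)
    (hF₂ : ∀ x₁ x₂ t, HasFDerivAt (fun y => f₂ x₁ y t)
        (LinearMap.toContinuousLinearMap (Matrix.mulVecLin (F₂ x₁ x₂ t))) x₂)
    (hF₂₁ : ∀ x₁ x₂ t, HasFDerivAt (fun y => f₂ y x₂ t)
        (LinearMap.toContinuousLinearMap (Matrix.mulVecLin (F₂₁ x₁ x₂ t))) x₁)
    (t₀ lam₁ lam₂ B : ℝ) (hlam₁ : 0 < lam₁) (hlam₂ : 0 < lam₂) (hB : 0 ≤ B)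
    (hc₁ : ∀ x₁ t, t₀ ≤ t → ∀ v : Fin n₁ → ℝ,
        v ⬝ᵥ ((F₁ x₁ t + (F₁ x₁ t)ᵀ) *ᵥ v) ≤ -2 * lam₁ * (v ⬝ᵥ v))
    (hc₂ : ∀ x₁ x₂ t, t₀ ≤ t → ∀ v : Fin n₂ → ℝ,
        v ⬝ᵥ ((F₂ x₁ x₂ t + (F₂ x₁ x₂ t)ᵀ) *ᵥ v) ≤ -2 * lam₂ * (v ⬝ᵥ v))
    (hbound : ∀ x₁ x₂ t v, Real.sqrt ((F₂₁ x₁ x₂ t *ᵥ v) ⬝ᵥ (F₂₁ x₁ x₂ t *ᵥ v))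
        ≤ B * Real.sqrt (v ⬝ᵥ v)) :
    ∃ C : ℝ, 1 ≤ C ∧ ∃ lam : ℝ, 0 < lam ∧
      ∀ (x₁ y₁ : ℝ → Fin n₁ → ℝ) (x₂ y₂ : ℝ → Fin n₂ → ℝ),
        (∀ t, t₀ ≤ t → HasDerivAt x₁ (f₁ (x₁ t) t) t) →
        (∀ t, t₀ ≤ t → HasDerivAt y₁ (f₁ (y₁ t) t) t) →
        (∀ t, t₀ ≤ t → HasDerivAt x₂ (f₂ (x₁ t) (x₂ t) t) t) →
        (∀ t, t₀ ≤ t → HasDerivAt y₂ (f₂ (y₁ t) (y₂ t) t) t) →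
        ∀ t, t₀ ≤ t →
          Real.sqrt ((x₁ t - y₁ t) ⬝ᵥ (x₁ t - y₁ t) + (x₂ t - y₂ t) ⬝ᵥ (x₂ t - y₂ t))
            ≤ C * Real.exp (-lam * (t - t₀)) *
              Real.sqrt ((x₁ t₀ - y₁ t₀) ⬝ᵥ (x₁ t₀ - y₁ t₀)
                + (x₂ t₀ - y₂ t₀) ⬝ᵥ (x₂ t₀ - y₂ t₀)) :=
  stmt13_general n₁ n₂ f₁ f₂ F₁ F₂ F₂₁ hF₁ hF₂ hF₂₁ t₀ lam₁ lam₂ B hlam₁ hlam₂ hc₁ hc₂ hbound
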